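/- Let F be an (n,m)-function with F(0) = 0 such that for every μ ∈ 𝔽₂^m∖{0} the component μ·F is not affine. Let w_min and w_max denote the minimum and maximum Hamming weights of nonzero codewords of the binary linear code C_F. Then 2·w_min ≤ w_max (i.e. C_F violates the AB condition w_min/w_max > 1/2) if and only if 2·max{W_F(μ,ν) : μ ∈ 𝔽₂^m∖{0}, ν ∈ 𝔽₂ⁿ} − min{W_F(μ,ν) : μ ∈ 𝔽₂^m∖{0}, ν ∈ 𝔽₂ⁿ} ≥ 2ⁿ. -/

import Mathlib

def dotp {n : ℕ} (v x : Fin n → ZMod 2) : ZMod 2 := ∑ i, v i * x i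

def wht {n : ℕ} (f : (Fin n → ZMod 2) → ZMod 2) (ν : Fin n → ZMod 2) : ℤ :=
  ∑ x : Fin n → ZMod 2, (-1 : ℤ) ^ (f x + dotp ν x).val

def whtF {n m : ℕ} (F : (Fin n → ZMod 2) → (Fin m → ZMod 2))
    (μ : Fin m → ZMod 2) (ν : Fin n → ZMod 2) : ℤ :=
  wht (fun x => dotp μ (F x)) ν

def cw {n m : ℕ} (F : (Fin n → ZMod 2) → (Fin m → ZMod 2))
    (μ : Fin m → ZMod 2) (ν : Fin n → ZMod 2) :
    {x : Fin n → ZMod 2 // x ≠ 0} → ZMod 2 :=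
  fun x => dotp μ (F x.1) + dotp ν x.1

def codeF {n m : ℕ} (F : (Fin n → ZMod 2) → (Fin m → ZMod 2)) :
    Set ({x : Fin n → ZMod 2 // x ≠ 0} → ZMod 2) :=
  Set.range fun p : (Fin m → ZMod 2) × (Fin n → ZMod 2) => cw F p.1 p.2

def wt {n : ℕ} (c : {x : Fin n → ZMod 2 // x ≠ 0} → ZMod 2) : ℕ :=
  (Finset.univ.filter fun x => c x = 1).card

def IsMinimal {n : ℕ} (C : Set ({x : Fin n → ZMod 2 // x ≠ 0} → ZMod 2)) : Prop :=
  ∀ c ∈ C, ∀ c' ∈ C, c ≠ 0 → c' ≠ 0 →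
    {x | c' x = 1} ⊆ {x | c x = 1} → c' = c

def weights {n m : ℕ} (F : (Fin n → ZMod 2) → (Fin m → ZMod 2)) : Set ℕ :=
  {w | ∃ c ∈ codeF F, c ≠ 0 ∧ wt c = w}

/-! Since `F 0 = 0`, the codeword `c(μ,ν)` has weight `#{x | μ·F(x) + ν·x = 1}`, so
`W_F(μ,ν) = 2ⁿ - 2 wt c(μ,ν)`. The nonzero codewords are the `c(μ,ν)` with `μ ≠ 0` (by
non-affinity) and the `c(0,ν)` with `ν ≠ 0`, whose Walsh value is `0`. As `∑_ν W_F(μ,ν) = 2ⁿ` and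
all `W_F(μ,ν)` are even, the largest Walsh value is positive and the smallest is nonpositive, so
the extra value `0` moves neither extreme: `2 w_min = 2ⁿ - W_max` and `2 w_max = 2ⁿ - W_min`. -/

open Finset Matrix

lemma dotp_eq_dotProduct {n : ℕ} (v x : Fin n → ZMod 2) : dotp v x = v ⬝ᵥ x := rfl

lemma neg_one_pow_val_add (a b : ZMod 2) :
    (-1 : ℤ) ^ (a + b).val = (-1) ^ a.val * (-1) ^ b.val := by
  decide +revert

lemma neg_one_pow_val_eq_one_iff (a : ZMod 2) : (-1 : ℤ) ^ a.val = 1 ↔ a = 0 := by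
  decide +revert

lemma sum_neg_one_pow_val {α : Type*} [Fintype α] (g : α → ZMod 2) :
    ∑ a, (-1 : ℤ) ^ (g a).val = Fintype.card α - 2 * #{a | g a = 1} := by
  have sign_eq : ∀ b : ZMod 2, (-1 : ℤ) ^ b.val = 1 - 2 * if b = 1 then 1 else 0 := by decide
  simp only [sign_eq, sum_sub_distrib, ← mul_sum, sum_boole, sum_const, card_univ,
    nsmul_eq_mul, mul_one]

def dotpChar {n : ℕ} (x : Fin n → ZMod 2) : AddChar (Fin n → ZMod 2) ℤ where
  toFun ν := (-1) ^ (dotp ν x).val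
  map_zero_eq_one' := by simp [dotp_eq_dotProduct]
  map_add_eq_mul' ν ν' := by simp [dotp_eq_dotProduct, add_dotProduct, neg_one_pow_val_add]

lemma dotpChar_apply {n : ℕ} (x ν : Fin n → ZMod 2) : dotpChar x ν = (-1) ^ (dotp ν x).val := rfl

lemma dotpChar_eq_zero_iff {n : ℕ} (x : Fin n → ZMod 2) : dotpChar x = 0 ↔ x = 0 := by
  refine ⟨fun h => funext fun i => ?_, fun h => ?_⟩
  · have := DFunLike.congr_fun h (Pi.single i 1)
    simpa [dotpChar, dotp_eq_dotProduct, neg_one_pow_val_eq_one_iff] using this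
  · ext ν
    simp [dotpChar, dotp_eq_dotProduct, h]

lemma sum_neg_one_pow_dotp {n : ℕ} (x : Fin n → ZMod 2) :
    ∑ ν : Fin n → ZMod 2, (-1 : ℤ) ^ (dotp ν x).val = if x = 0 then 2 ^ n else 0 := by
  classical
  have := (dotpChar x).sum_eq_ite
  simp only [dotpChar_eq_zero_iff] at this
  simpa only [dotpChar_apply, Fintype.card_fun, ZMod.card, Fintype.card_fin, Nat.cast_pow,
    Nat.cast_ofNat] using this

lemma sum_wht {n : ℕ} (f : (Fin n → ZMod 2) → ZMod 2) :
    ∑ ν, wht f ν = 2 ^ n * (-1) ^ (f 0).val := by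
  simp only [wht, neg_one_pow_val_add]
  rw [sum_comm]
  simp only [← mul_sum, sum_neg_one_pow_dotp, mul_ite, mul_zero, sum_ite_eq', mem_univ,
    if_true]
  exact mul_comm _ _

lemma wht_eq_two_pow_sub {n : ℕ} (f : (Fin n → ZMod 2) → ZMod 2) (ν : Fin n → ZMod 2) :
    wht f ν = 2 ^ n - 2 * #{x | f x + dotp ν x = 1} := by
  simp [wht, sum_neg_one_pow_val]

lemma wt_restrict {n : ℕ} (g : (Fin n → ZMod 2) → ZMod 2) (hg : g 0 = 0) :
    wt (fun x : {x // x ≠ 0} => g x.1) = #{x | g x = 1} := by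
  rw [wt, ← Fintype.card_subtype, ← Fintype.card_subtype]
  refine Fintype.card_congr
    (Equiv.subtypeSubtypeEquivSubtype (p := (· ≠ 0)) (q := (g · = 1)) fun hx => ?_)
  rintro rfl
  simp [hg] at hx

section VectorialFunction

variable {n m : ℕ} {F : (Fin n → ZMod 2) → (Fin m → ZMod 2)}

lemma whtF_eq_two_pow_sub_two_mul_wt (h0 : F 0 = 0) (μ : Fin m → ZMod 2)
    (ν : Fin n → ZMod 2) : whtF F μ ν = 2 ^ n - 2 * (wt (cw F μ ν) : ℤ) := by
  rw [whtF, wht_eq_two_pow_sub, ← wt_restrict _ (by simp [h0, dotp_eq_dotProduct])]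
  rfl

lemma sum_whtF (h0 : F 0 = 0) (μ : Fin m → ZMod 2) : ∑ ν, whtF F μ ν = 2 ^ n := by
  simp [whtF, sum_wht, h0, dotp_eq_dotProduct]

lemma whtF_zero_left {ν : Fin n → ZMod 2} (hν : ν ≠ 0) : whtF F 0 ν = 0 := by
  simp only [whtF, wht, dotp_eq_dotProduct, zero_dotProduct, zero_add]
  simpa [dotp_eq_dotProduct, dotProduct_comm, hν] using sum_neg_one_pow_dotp ν

lemma cw_eq_zero_iff {μ : Fin m → ZMod 2} {ν : Fin n → ZMod 2} :
    cw F μ ν = 0 ↔ ∀ x ≠ 0, dotp μ (F x) = dotp ν x := by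
  simp [funext_iff, cw, CharTwo.add_eq_zero]

lemma cw_zero_left_eq_zero_iff {ν : Fin n → ZMod 2} : cw F 0 ν = 0 ↔ ν = 0 := by
  rw [cw_eq_zero_iff]
  refine ⟨fun h => funext fun i => ?_, fun h x _ => by simp [h, dotp_eq_dotProduct]⟩
  simpa [dotp_eq_dotProduct, eq_comm] using h (Pi.single i 1) (by simp)

lemma cw_ne_zero_of_not_affine (h0 : F 0 = 0) {μ : Fin m → ZMod 2}
    (hμ : ¬ ∃ (ν : Fin n → ZMod 2) (ε : ZMod 2), ∀ x, dotp μ (F x) = dotp ν x + ε)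
    (ν : Fin n → ZMod 2) : cw F μ ν ≠ 0 := by
  intro h
  refine hμ ⟨ν, 0, fun x => ?_⟩
  rw [add_zero]
  rcases eq_or_ne x 0 with rfl | hx
  · simp [h0, dotp_eq_dotProduct]
  · exact cw_eq_zero_iff.1 h x hx

lemma pos_of_weights_nonempty (h : (weights F).Nonempty) : 0 < n := by
  obtain ⟨_, c, -, hc, -⟩ := h
  refine Nat.pos_of_ne_zero fun hn => hc (funext fun x => ?_)
  subst hn
  exact absurd (Subsingleton.elim x.1 0) x.2

def walshSpectrum (F : (Fin n → ZMod 2) → (Fin m → ZMod 2)) : Set ℤ :=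
  {w | ∃ (μ : Fin m → ZMod 2) (ν : Fin n → ZMod 2), μ ≠ 0 ∧ whtF F μ ν = w}

lemma image_weights_eq_insert_walshSpectrum (h0 : F 0 = 0)
    (hna : ∀ μ : Fin m → ZMod 2, μ ≠ 0 →
      ¬ ∃ (ν : Fin n → ZMod 2) (ε : ZMod 2), ∀ x, dotp μ (F x) = dotp ν x + ε)
    (hn : 0 < n) :
    (fun w : ℕ => (2 : ℤ) ^ n - 2 * w) '' weights F = insert 0 (walshSpectrum F) := by
  ext W
  constructor
  · rintro ⟨w, ⟨c, ⟨⟨μ, ν⟩, rfl⟩, hc, rfl⟩, rfl⟩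
    dsimp only at hc ⊢
    rw [← whtF_eq_two_pow_sub_two_mul_wt h0]
    rcases eq_or_ne μ 0 with rfl | hμ
    · exact Or.inl (whtF_zero_left fun hν => hc (cw_zero_left_eq_zero_iff.2 hν))
    · exact Or.inr ⟨μ, ν, hμ, rfl⟩
  · rintro (rfl | ⟨μ, ν, hμ, rfl⟩)
    · have : Nonempty (Fin n) := ⟨⟨0, hn⟩⟩
      obtain ⟨ν, hν⟩ := exists_ne (0 : Fin n → ZMod 2)
      refine ⟨_, ⟨_, ⟨(0, ν), rfl⟩, mt cw_zero_left_eq_zero_iff.1 hν, rfl⟩, ?_⟩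
      dsimp only
      rw [← whtF_eq_two_pow_sub_two_mul_wt h0, whtF_zero_left hν]
    · exact ⟨_, ⟨_, ⟨(μ, ν), rfl⟩, cw_ne_zero_of_not_affine h0 (hna μ hμ) ν, rfl⟩,
        (whtF_eq_two_pow_sub_two_mul_wt h0 μ ν).symm⟩

lemma pos_of_isGreatest_walshSpectrum (h0 : F 0 = 0) {W : ℤ}
    (hW : IsGreatest (walshSpectrum F) W) : 0 < W := by
  obtain ⟨μ, -, hμ, -⟩ := hW.1
  obtain ⟨ν, -, hν⟩ : ∃ ν ∈ univ, (0 : ℤ) < whtF F μ ν :=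
    exists_lt_of_sum_lt (by simp [sum_whtF h0])
  exact hν.trans_le (hW.2 ⟨μ, ν, hμ, rfl⟩)

lemma nonpos_of_isLeast_walshSpectrum (h0 : F 0 = 0) (hn : 0 < n) {W : ℤ}
    (hW : IsLeast (walshSpectrum F) W) : W ≤ 0 := by
  obtain ⟨μ, -, hμ, -⟩ := hW.1
  obtain ⟨ν, -, hν⟩ : ∃ ν ∈ univ, whtF F μ ν ≤ 1 :=
    exists_le_of_sum_le univ_nonempty (by simp [sum_whtF h0])
  have hW_le : W ≤ whtF F μ ν := hW.2 ⟨μ, ν, hμ, rfl⟩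
  rw [whtF_eq_two_pow_sub_two_mul_wt h0] at hW_le hν
  obtain ⟨k, rfl⟩ := Nat.exists_eq_add_of_lt hn
  rw [pow_succ] at hW_le hν
  omega

end VectorialFunction

theorem stmt8 (n m : ℕ) (F : (Fin n → ZMod 2) → (Fin m → ZMod 2))
    (h0 : F 0 = 0)
    (hna : ∀ μ : Fin m → ZMod 2, μ ≠ 0 →
      ¬ ∃ (ν : Fin n → ZMod 2) (ε : ZMod 2), ∀ x, dotp μ (F x) = dotp ν x + ε)
    (wmin wmax : ℕ)
    (hwmin : IsLeast (weights F) wmin) (hwmax : IsGreatest (weights F) wmax)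
    (Wmax Wmin : ℤ)
    (hWmax : IsGreatest {w : ℤ | ∃ (μ : Fin m → ZMod 2) (ν : Fin n → ZMod 2),
      μ ≠ 0 ∧ whtF F μ ν = w} Wmax)
    (hWmin : IsLeast {w : ℤ | ∃ (μ : Fin m → ZMod 2) (ν : Fin n → ZMod 2),
      μ ≠ 0 ∧ whtF F μ ν = w} Wmin) :
    2 * wmin ≤ wmax ↔ 2 ^ n ≤ 2 * Wmax - Wmin := by
  have hn : 0 < n := pos_of_weights_nonempty ⟨wmin, hwmin.1⟩
  have hanti : Antitone fun w : ℕ => (2 : ℤ) ^ n - 2 * w := fun a b hab => by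
    dsimp only; omega
  have hwmin_eq : (2 : ℤ) ^ n - 2 * wmin = Wmax := by
    have h := hanti.map_isLeast hwmin
    rw [image_weights_eq_insert_walshSpectrum h0 hna hn] at h
    have h' := hWmax.insert 0
    rw [max_eq_right (pos_of_isGreatest_walshSpectrum h0 hWmax).le] at h'
    exact h.unique h'
  have hwmax_eq : (2 : ℤ) ^ n - 2 * wmax = Wmin := by
    have h := hanti.map_isGreatest hwmax
    rw [image_weights_eq_insert_walshSpectrum h0 hna hn] at h
    have h' := hWmin.insert 0
    rw [min_eq_right (nonpos_of_isLeast_walshSpectrum h0 hn hWmin)] at h'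
    exact h.unique h'
  omega
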